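/- Let m ≥ 1 and let E ⊂ ℝ^m be a Lebesgue-measurable set of zero relative Lebesgue density, i.e. lim_{r→∞} λ(E ∩ B̄(0,r))/r^m = 0. If v is a subharmonic function on ℝ^m of finite order (i.e. limsup_{|x|→∞} ln(1+v⁺(x))/ln|x| < ∞) which is bounded above on ℝ^m ∖ E, then v is bounded above on all of ℝ^m, and moreover sup_{ℝ^m} v = sup_{ℝ^m∖E} v. -/

import Mathlib

open MeasureTheory Metric Filter

def IsSubharmonic {m : ℕ} (v : EuclideanSpace ℝ (Fin m) → ℝ) : Prop :=
  UpperSemicontinuous v ∧ LocallyIntegrable v ∧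
    ∀ x ρ, 0 < ρ → v x ≤ ⨍ y in closedBall x ρ, v y

def HasFiniteOrder {m : ℕ} (v : EuclideanSpace ℝ (Fin m) → ℝ) : Prop :=
  ∃ c : ℝ, ∀ᶠ x : EuclideanSpace ℝ (Fin m) in Filter.cocompact _,
    Real.log (1 + max (v x) 0) / Real.log ‖x‖ ≤ c

lemma cocompact_to_norm {m : ℕ} {P : EuclideanSpace ℝ (Fin m) → Prop}
    (h : ∀ᶠ x in cocompact (EuclideanSpace ℝ (Fin m)), P x) :
    ∃ R : ℝ, ∀ x, R ≤ ‖x‖ → P x := by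
  obtain ⟨K, hK, hKP⟩ := mem_cocompact.mp h
  obtain ⟨R, hR⟩ := hK.isBounded.subset_closedBall 0
  refine ⟨R + 1, fun x hx => ?_⟩
  apply hKP
  intro hxK
  have := hR hxK
  simp only [mem_closedBall, dist_zero_right] at this
  linarith

lemma submean' {m : ℕ} {v : EuclideanSpace ℝ (Fin m) → ℝ} (hv : IsSubharmonic v)
    (x : EuclideanSpace ℝ (Fin m)) {ρ : ℝ} (hρ : 0 < ρ) :
    v x ≤ (volume (closedBall x ρ)).toReal⁻¹ * ∫ y in closedBall x ρ, v y := by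
  have h := hv.2.2 x ρ hρ
  rwa [setAverage_eq, smul_eq_mul] at h

lemma growth {m : ℕ} {v : EuclideanSpace ℝ (Fin m) → ℝ}
    (hv : IsSubharmonic v) (hord : HasFiniteOrder v) :
    ∃ c K : ℝ, 1 ≤ c ∧ 0 ≤ K ∧ ∀ x, v x ≤ K + (max ‖x‖ 1) ^ c := by
  obtain ⟨c₀, hc₀⟩ := hord
  obtain ⟨R₀, hR₀⟩ := cocompact_to_norm hc₀
  set c : ℝ := max c₀ 1 with hc
  set R : ℝ := max R₀ 2 with hRdef
  have hR2 : (2:ℝ) ≤ R := le_max_right _ _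
  have hRpos : (0:ℝ) < R := by linarith
  -- inner bound via submean
  set I : ℝ := ∫ y in closedBall (0 : EuclideanSpace ℝ (Fin m)) (3*R), ‖v y‖ with hI
  set V : ℝ := (volume (closedBall (0 : EuclideanSpace ℝ (Fin m)) (2*R))).toReal with hV
  have hVpos : 0 < V := ENNReal.toReal_pos
    (measure_closedBall_pos volume _ (by linarith)).ne' measure_closedBall_lt_top.ne
  have hinner : ∀ x : EuclideanSpace ℝ (Fin m), ‖x‖ ≤ R → v x ≤ V⁻¹ * I := by
    intro x hx
    have hVx : (volume (closedBall x (2*R))).toReal = V := by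
      rw [hV, Measure.addHaar_closedBall_center]
    have h1 := submean' hv x (show (0:ℝ) < 2*R by linarith)
    rw [hVx] at h1
    have hsub : closedBall x (2*R) ⊆ closedBall (0 : EuclideanSpace ℝ (Fin m)) (3*R) := by
      apply closedBall_subset_closedBall'
      rw [dist_zero_right]
      linarith
    have hint : IntegrableOn (fun y => ‖v y‖) (closedBall (0 : EuclideanSpace ℝ (Fin m)) (3*R))
        volume := (hv.2.1.integrableOn_isCompact (isCompact_closedBall _ _)).norm
    have h2 : (∫ y in closedBall x (2*R), v y) ≤ I := by
      calc (∫ y in closedBall x (2*R), v y) ≤ ‖∫ y in closedBall x (2*R), v y‖ :=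
            le_abs_self _
        _ ≤ ∫ y in closedBall x (2*R), ‖v y‖ := norm_integral_le_integral_norm _
        _ ≤ I := setIntegral_mono_set hint
            (Eventually.of_forall fun y => norm_nonneg _) (HasSubset.Subset.eventuallyLE hsub)
    calc v x ≤ V⁻¹ * ∫ y in closedBall x (2*R), v y := h1
      _ ≤ V⁻¹ * I := by
          apply mul_le_mul_of_nonneg_left h2 (inv_nonneg.2 hVpos.le)
  refine ⟨c, max (V⁻¹ * I) 0, le_max_right _ _, le_max_right _ _, fun x => ?_⟩
  rcases le_or_gt ‖x‖ R with hx | hx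
  · have := hinner x hx
    have h0 : (0:ℝ) ≤ (max ‖x‖ 1) ^ c := Real.rpow_nonneg (le_trans zero_le_one (le_max_right _ _)) _
    have := le_max_left (V⁻¹ * I) 0
    nlinarith [hinner x hx]
  · -- outer
    have hx1 : (1:ℝ) < ‖x‖ := by linarith
    have hxpos : (0:ℝ) < ‖x‖ := by linarith
    have hlog : 0 < Real.log ‖x‖ := Real.log_pos hx1
    have hq : Real.log (1 + max (v x) 0) / Real.log ‖x‖ ≤ c₀ :=
      hR₀ x (by linarith [le_max_left R₀ 2])
    have hq' : Real.log (1 + max (v x) 0) ≤ c * Real.log ‖x‖ := by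
      have := (div_le_iff₀ hlog).mp hq
      have hcc : c₀ ≤ c := le_max_left _ _
      nlinarith
    have hpos1 : (0:ℝ) < 1 + max (v x) 0 := by positivity
    have hpos2 : (0:ℝ) < ‖x‖ ^ c := Real.rpow_pos_of_pos hxpos _
    have : 1 + max (v x) 0 ≤ ‖x‖ ^ c := by
      have hq'' : Real.log (1 + max (v x) 0) ≤ Real.log (‖x‖ ^ c) := by
        rw [Real.log_rpow hxpos]; exact hq'
      have h := Real.exp_le_exp.2 hq''
      rwa [Real.exp_log hpos1, Real.exp_log hpos2] at h
    have hmax : max ‖x‖ 1 = ‖x‖ := max_eq_left hx1.le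
    have hK0 : (0:ℝ) ≤ max (V⁻¹ * I) 0 := le_max_right _ _
    rw [hmax]
    have : v x ≤ ‖x‖ ^ c := le_trans (le_trans (le_max_left _ _) (by linarith)) le_rfl
    linarith

lemma vol_ball_toReal {m : ℕ} (x : EuclideanSpace ℝ (Fin m)) {r : ℝ} (hr : 0 ≤ r) :
    (volume (closedBall x r)).toReal
      = r ^ m * (volume (closedBall (0 : EuclideanSpace ℝ (Fin m)) 1)).toReal := by
  rw [Measure.addHaar_closedBall' volume x hr, ENNReal.toReal_mul,
    ENNReal.toReal_ofReal (by positivity), finrank_euclideanSpace_fin]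

lemma vol_pos {m : ℕ} (x : EuclideanSpace ℝ (Fin m)) {r : ℝ} (hr : 0 < r) :
    0 < (volume (closedBall x r)).toReal :=
  ENNReal.toReal_pos (measure_closedBall_pos volume x hr).ne' measure_closedBall_lt_top.ne

lemma core {m : ℕ} {E : Set (EuclideanSpace ℝ (Fin m))} (hE : MeasurableSet E)
    (hdens : Tendsto
      (fun r : ℝ => (volume (E ∩ closedBall (0 : EuclideanSpace ℝ (Fin m)) r)).toReal / r ^ m)
      atTop (nhds 0))
    {v : EuclideanSpace ℝ (Fin m) → ℝ}
    (hv : IsSubharmonic v) (hord : HasFiniteOrder v)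
    {M : ℝ} (hM : ∀ y, y ∉ E → v y ≤ M) : ∀ x, v x ≤ M := by
  obtain ⟨c, K₀, hc1, hK₀, hgrow⟩ := growth hv hord
  have hc0 : (0:ℝ) ≤ c := by linarith
  set w : EuclideanSpace ℝ (Fin m) → ℝ := fun y => max (v y - M) 0 with hw
  have hwnn : ∀ y, 0 ≤ w y := fun y => le_max_right _ _
  have hwE : ∀ y, y ∉ E → w y = 0 := fun y hy => max_eq_right (by linarith [hM y hy])
  set K : ℝ := K₀ + |M| with hK
  have hKnn : 0 ≤ K := by positivity
  have hwglob : ∀ x, w x ≤ K + (max ‖x‖ 1) ^ c := by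
    intro x
    have h1 := hgrow x
    have h2 : (0:ℝ) ≤ (max ‖x‖ 1) ^ c :=
      Real.rpow_nonneg (le_trans zero_le_one (le_max_right _ _)) _
    have h3 := neg_abs_le M
    have h4 := abs_nonneg M
    have : w x = max (v x - M) 0 := rfl
    rw [this, hK]
    apply max_le _ (by positivity)
    linarith
  have hw_int : ∀ (x : EuclideanSpace ℝ (Fin m)) (ρ : ℝ),
      IntegrableOn w (closedBall x ρ) volume := fun x ρ =>
    ((hv.2.1.integrableOn_isCompact (isCompact_closedBall _ _)).sub
      (integrableOn_const measure_closedBall_lt_top.ne)).pos_part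
  have hw_sub : ∀ (x : EuclideanSpace ℝ (Fin m)) (ρ : ℝ), 0 < ρ →
      w x ≤ (volume (closedBall x ρ)).toReal⁻¹ * ∫ y in closedBall x ρ, w y := by
    intro x ρ hρ
    set V : ℝ := (volume (closedBall x ρ)).toReal with hVdef
    have hV : 0 < V := vol_pos x hρ
    rcases le_or_gt (v x) M with h | h
    · have hzero : w x = 0 := max_eq_right (by linarith)
      rw [hzero]
      exact mul_nonneg (inv_nonneg.2 hV.le)
        (setIntegral_nonneg measurableSet_closedBall fun y _ => hwnn y)
    · have hwx : w x = v x - M := max_eq_left (by linarith)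
      have h1 := submean' hv x hρ
      have hint_v : IntegrableOn v (closedBall x ρ) volume :=
        hv.2.1.integrableOn_isCompact (isCompact_closedBall _ _)
      have hint_c : IntegrableOn (fun _ => M) (closedBall x ρ) volume :=
        integrableOn_const measure_closedBall_lt_top.ne
      have h3 : (∫ y in closedBall x ρ, (v y - M)) = (∫ y in closedBall x ρ, v y) - V * M := by
        rw [integral_sub hint_v hint_c, setIntegral_const, smul_eq_mul]; rfl
      have h2 : (∫ y in closedBall x ρ, (v y - M)) ≤ ∫ y in closedBall x ρ, w y :=
        setIntegral_mono_on (hint_v.sub hint_c) (hw_int x ρ) measurableSet_closedBall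
          fun y _ => le_max_left _ _
      have h4 := mul_le_mul_of_nonneg_left h2 (inv_nonneg.2 hV.le)
      rw [hwx]
      have hVne : V ≠ 0 := hV.ne'
      calc v x - M ≤ V⁻¹ * (∫ y in closedBall x ρ, v y) - M := by linarith [h1]
        _ = V⁻¹ * ((∫ y in closedBall x ρ, v y) - V * M) := by field_simp
        _ = V⁻¹ * (∫ y in closedBall x ρ, (v y - M)) := by rw [h3]
        _ ≤ V⁻¹ * ∫ y in closedBall x ρ, w y := h4
  set c₁ : ℝ := (volume (closedBall (0 : EuclideanSpace ℝ (Fin m)) 1)).toReal with hc₁def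
  have hc₁pos : 0 < c₁ := vol_pos 0 one_pos
  set δ : ℝ := ((2:ℝ) ^ (c+1))⁻¹ with hδdef
  have h2c : (0:ℝ) < (2:ℝ) ^ c := Real.rpow_pos_of_pos two_pos c
  have h2c1 : (1:ℝ) ≤ (2:ℝ) ^ c := by
    have := Real.rpow_le_rpow_of_exponent_le one_le_two hc0
    rwa [Real.rpow_zero] at this
  have hδpos : 0 < δ := inv_pos.2 (Real.rpow_pos_of_pos two_pos _)
  have hhalf : δ * (2:ℝ) ^ c = 1/2 := by
    rw [hδdef, Real.rpow_add two_pos, Real.rpow_one]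
    have := h2c.ne'
    field_simp
  have hδlt : δ < 1 := by
    rw [hδdef]
    rw [inv_lt_one_iff₀]
    right
    have := Real.rpow_lt_rpow_of_exponent_lt one_lt_two (show (0:ℝ) < c + 1 by linarith)
    rwa [Real.rpow_zero] at this
  have hη : 0 < δ * c₁ / 2 ^ m := by positivity
  obtain ⟨T, hT⟩ := eventually_atTop.mp (hdens.eventually (gt_mem_nhds hη))
  set r₀ : ℝ := max (T/2) 1 with hr₀def
  have hr₀1 : (1:ℝ) ≤ r₀ := le_max_right _ _
  have hEr : ∀ t : ℝ, 2 * r₀ ≤ t →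
      (volume (E ∩ closedBall (0 : EuclideanSpace ℝ (Fin m)) t)).toReal
        ≤ (δ * c₁ / 2 ^ m) * t ^ m := by
    intro t ht
    have hT2 : T / 2 ≤ r₀ := le_max_left _ _
    have ht2 : T ≤ t := by linarith
    have h := (hT t ht2).le
    have htpos : (0:ℝ) < t := by linarith
    have htm : (0:ℝ) < t ^ m := by positivity
    calc (volume (E ∩ closedBall (0 : EuclideanSpace ℝ (Fin m)) t)).toReal
        = ((volume (E ∩ closedBall (0 : EuclideanSpace ℝ (Fin m)) t)).toReal / t ^ m) * t ^ m := by
          field_simp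
      _ ≤ (δ * c₁ / 2 ^ m) * t ^ m := mul_le_mul_of_nonneg_right h htm.le
  have main : ∀ n : ℕ, ∀ x, w x ≤ δ ^ n * (K + ((2:ℝ) ^ c) ^ (n+1) * (max ‖x‖ r₀) ^ c) := by
    intro n
    induction n with
    | zero =>
      intro x
      simp only [pow_zero, one_mul, zero_add, pow_one]
      have hb0 : (0:ℝ) ≤ max ‖x‖ 1 := le_trans zero_le_one (le_max_right _ _)
      have h1 : (max ‖x‖ 1) ^ c ≤ (max ‖x‖ r₀) ^ c :=
        Real.rpow_le_rpow hb0 (max_le_max le_rfl hr₀1) hc0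
      have h2 : (0:ℝ) ≤ (max ‖x‖ r₀) ^ c :=
        Real.rpow_nonneg (le_trans zero_le_one (le_trans hr₀1 (le_max_right _ _))) _
      have h3 : (max ‖x‖ r₀) ^ c ≤ (2:ℝ) ^ c * (max ‖x‖ r₀) ^ c := by nlinarith
      linarith [hwglob x]
    | succ n ih =>
      intro x
      set s : ℝ := max ‖x‖ r₀ with hs
      have hs1 : (1:ℝ) ≤ s := le_trans hr₀1 (le_max_right _ _)
      have hspos : (0:ℝ) < s := by linarith
      have hxs : ‖x‖ ≤ s := le_max_left _ _
      have hVBpos : 0 < (volume (closedBall x s)).toReal := vol_pos x hspos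
      set VB : ℝ := (volume (closedBall x s)).toReal with hVBdef
      have hVBval : VB = s ^ m * c₁ := vol_ball_toReal x hspos.le
      have hnorm2s : ∀ y ∈ closedBall x s, ‖y‖ ≤ 2 * s := by
        intro y hy
        have hd : dist y x ≤ s := mem_closedBall.mp hy
        have := dist_triangle y x 0
        rw [dist_zero_right, dist_zero_right] at this
        linarith
      have hsubset : E ∩ closedBall x s ⊆
          E ∩ closedBall (0 : EuclideanSpace ℝ (Fin m)) (2*s) := by
        rintro y ⟨hyE, hyB⟩
        exact ⟨hyE, by rw [mem_closedBall, dist_zero_right]; exact hnorm2s y hyB⟩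
      have hmeas : (volume (E ∩ closedBall x s)).toReal ≤ δ * VB := by
        have h2 : (volume (E ∩ closedBall x s)).toReal
            ≤ (volume (E ∩ closedBall (0 : EuclideanSpace ℝ (Fin m)) (2*s))).toReal :=
          ENNReal.toReal_mono
            (lt_of_le_of_lt (measure_mono Set.inter_subset_right) measure_closedBall_lt_top).ne
            (measure_mono hsubset)
        have h3 := hEr (2*s) (by have h := le_max_right ‖x‖ r₀; rw [← hs] at h; linarith)
        have h4 : (δ * c₁ / 2 ^ m) * (2*s) ^ m = δ * (s ^ m * c₁) := by
          rw [mul_pow]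
          have h2m : (0:ℝ) < 2 ^ m := by positivity
          field_simp
        rw [hVBval]
        calc (volume (E ∩ closedBall x s)).toReal
            ≤ (δ * c₁ / 2 ^ m) * (2*s) ^ m := le_trans h2 h3
          _ = δ * (s ^ m * c₁) := h4
      set C : ℝ := δ ^ n * (K + ((2:ℝ) ^ c) ^ (n+2) * s ^ c) with hC
      have hsc : (0:ℝ) ≤ s ^ c := Real.rpow_nonneg hspos.le _
      have hCnn : 0 ≤ C :=
        mul_nonneg (pow_nonneg hδpos.le n)
          (add_nonneg hKnn (mul_nonneg (pow_nonneg h2c.le _) hsc))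
      have hptw : ∀ y ∈ E ∩ closedBall x s, ‖w y‖ ≤ C := by
        rintro y ⟨_, hyB⟩
        have hmaxy : max ‖y‖ r₀ ≤ 2*s := by
          apply max_le (hnorm2s y hyB)
          have h := le_max_right ‖x‖ r₀
          rw [← hs] at h
          linarith
        have h1 := ih y
        have hb0 : (0:ℝ) ≤ max ‖y‖ r₀ := le_trans zero_le_one (le_trans hr₀1 (le_max_right _ _))
        have h2 : (max ‖y‖ r₀) ^ c ≤ ((2:ℝ)*s) ^ c := Real.rpow_le_rpow hb0 hmaxy hc0
        have h3 : ((2:ℝ)*s) ^ c = (2:ℝ) ^ c * s ^ c := Real.mul_rpow (by norm_num) hspos.le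
        rw [Real.norm_of_nonneg (hwnn y)]
        calc w y ≤ δ ^ n * (K + ((2:ℝ) ^ c) ^ (n+1) * (max ‖y‖ r₀) ^ c) := h1
          _ ≤ δ ^ n * (K + ((2:ℝ) ^ c) ^ (n+1) * ((2:ℝ) ^ c * s ^ c)) := by
              apply mul_le_mul_of_nonneg_left _ (pow_nonneg hδpos.le n)
              have h5 : ((2:ℝ) ^ c) ^ (n+1) * (max ‖y‖ r₀) ^ c
                  ≤ ((2:ℝ) ^ c) ^ (n+1) * ((2:ℝ) ^ c * s ^ c) := by
                apply mul_le_mul_of_nonneg_left _ (pow_nonneg h2c.le _)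
                rw [← h3]; exact h2
              linarith
          _ = C := by rw [hC]; ring
      have hint_w := hw_int x s
      have hsplit : (∫ y in closedBall x s, w y) = ∫ y in E ∩ closedBall x s, w y := by
        have hunion : (E ∩ closedBall x s) ∪ (Eᶜ ∩ closedBall x s) = closedBall x s := by
          rw [← Set.union_inter_distrib_right, Set.union_compl_self, Set.univ_inter]
        have hdisj : Disjoint (E ∩ closedBall x s) (Eᶜ ∩ closedBall x s) :=
          disjoint_compl_right.mono Set.inter_subset_left Set.inter_subset_left
        have hms : MeasurableSet (Eᶜ ∩ closedBall x s) :=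
          hE.compl.inter measurableSet_closedBall
        have h1 : (∫ y in (E ∩ closedBall x s) ∪ (Eᶜ ∩ closedBall x s), w y)
            = (∫ y in E ∩ closedBall x s, w y) + ∫ y in Eᶜ ∩ closedBall x s, w y :=
          setIntegral_union hdisj hms (hint_w.mono_set Set.inter_subset_right)
            (hint_w.mono_set Set.inter_subset_right)
        have h2 : (∫ y in Eᶜ ∩ closedBall x s, w y) = 0 :=
          setIntegral_eq_zero_of_forall_eq_zero fun y hy => hwE y hy.1
        conv_lhs => rw [← hunion]
        rw [h1, h2, add_zero]
      have hIbound : (∫ y in E ∩ closedBall x s, w y)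
          ≤ C * (volume (E ∩ closedBall x s)).toReal := by
        have hfin : volume (E ∩ closedBall x s) < ⊤ :=
          lt_of_le_of_lt (measure_mono Set.inter_subset_right) measure_closedBall_lt_top
        have hnb := norm_setIntegral_le_of_norm_le_const hfin
          hptw
        calc (∫ y in E ∩ closedBall x s, w y) ≤ ‖∫ y in E ∩ closedBall x s, w y‖ :=
              le_abs_self _
          _ ≤ C * (volume (E ∩ closedBall x s)).toReal := hnb
      calc w x ≤ VB⁻¹ * ∫ y in closedBall x s, w y := hw_sub x s hspos
        _ = VB⁻¹ * ∫ y in E ∩ closedBall x s, w y := by rw [hsplit]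
        _ ≤ VB⁻¹ * (C * (volume (E ∩ closedBall x s)).toReal) :=
            mul_le_mul_of_nonneg_left hIbound (inv_nonneg.2 hVBpos.le)
        _ ≤ VB⁻¹ * (C * (δ * VB)) :=
            mul_le_mul_of_nonneg_left (mul_le_mul_of_nonneg_left hmeas hCnn)
              (inv_nonneg.2 hVBpos.le)
        _ = δ * C := by field_simp [hVBpos.ne']
        _ = δ ^ (n+1) * (K + ((2:ℝ) ^ c) ^ (n+1+1) * s ^ c) := by rw [hC]; ring
  intro x
  set A : ℝ := (max ‖x‖ r₀) ^ c with hA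
  have heq : ∀ n : ℕ, δ ^ n * (K + ((2:ℝ) ^ c) ^ (n+1) * A)
      = δ ^ n * K + (1/2:ℝ) ^ n * ((2:ℝ) ^ c * A) := by
    intro n
    have : ((1:ℝ)/2) ^ n = (δ * (2:ℝ) ^ c) ^ n := by rw [hhalf]
    rw [this, mul_pow]
    ring
  have hlim : Tendsto (fun n : ℕ => δ ^ n * K + (1/2:ℝ) ^ n * ((2:ℝ) ^ c * A))
      atTop (nhds 0) := by
    have h1 : Tendsto (fun n : ℕ => δ ^ n) atTop (nhds 0) :=
      tendsto_pow_atTop_nhds_zero_of_lt_one hδpos.le hδlt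
    have h2 : Tendsto (fun n : ℕ => (1/2:ℝ) ^ n) atTop (nhds 0) :=
      tendsto_pow_atTop_nhds_zero_of_lt_one (by norm_num) (by norm_num)
    have := (h1.mul_const K).add (h2.mul_const ((2:ℝ) ^ c * A))
    simpa using this
  have hwx : w x ≤ 0 :=
    ge_of_tendsto' hlim fun n => le_trans (main n x) (le_of_eq (heq n))
  have hle : v x - M ≤ w x := le_max_left _ _
  linarith

theorem main_theorem (m : ℕ) (hm : 1 ≤ m)
    (E : Set (EuclideanSpace ℝ (Fin m))) (hE : MeasurableSet E)
    (hdens : Tendsto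
      (fun r : ℝ => (volume (E ∩ closedBall (0 : EuclideanSpace ℝ (Fin m)) r)).toReal / r ^ m)
      atTop (nhds 0))
    (v : EuclideanSpace ℝ (Fin m) → ℝ)
    (hv : IsSubharmonic v) (hord : HasFiniteOrder v)
    (hbdd : BddAbove (v '' Eᶜ)) :
    BddAbove (Set.range v) ∧ sSup (Set.range v) = sSup (v '' Eᶜ) := by
  have hc₁pos : 0 < (volume (closedBall (0 : EuclideanSpace ℝ (Fin m)) 1)).toReal :=
    vol_pos 0 one_pos
  -- Eᶜ is nonempty
  have hEc : Eᶜ.Nonempty := by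
    by_contra h
    have huniv : E = Set.univ := by
      rw [← Set.compl_empty_iff]
      exact Set.not_nonempty_iff_eq_empty.mp h
    have heq : ∀ᶠ r : ℝ in atTop,
        (volume (E ∩ closedBall (0 : EuclideanSpace ℝ (Fin m)) r)).toReal / r ^ m
          = (volume (closedBall (0 : EuclideanSpace ℝ (Fin m)) 1)).toReal := by
      filter_upwards [eventually_ge_atTop (1:ℝ)] with r hr
      have hr0 : (0:ℝ) < r := by linarith
      rw [huniv, Set.univ_inter, vol_ball_toReal _ hr0.le]
      field_simp
    have h2 : Tendsto (fun _ : ℝ =>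
        (volume (closedBall (0 : EuclideanSpace ℝ (Fin m)) 1)).toReal) atTop (nhds 0) :=
      hdens.congr' heq
    have := tendsto_nhds_unique tendsto_const_nhds h2
    linarith
  have hne : (v '' Eᶜ).Nonempty := hEc.image v
  set M : ℝ := sSup (v '' Eᶜ) with hM
  have hub : ∀ y, y ∉ E → v y ≤ M := fun y hy => le_csSup hbdd ⟨y, hy, rfl⟩
  have hall : ∀ x, v x ≤ M := core hE hdens hv hord hub
  have hbr : BddAbove (Set.range v) := ⟨M, by rintro _ ⟨x, rfl⟩; exact hall x⟩
  refine ⟨hbr, le_antisymm ?_ ?_⟩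
  · exact csSup_le (Set.range_nonempty v) (by rintro _ ⟨x, rfl⟩; exact hall x)
  · exact csSup_le_csSup hbr hne (Set.image_subset_range v Eᶜ)
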